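/- Let H be a real Hilbert space, let k₁, …, kₙ be elements of H, let y ∈ ℝⁿ, and let λ > 0. Define E_λ(f) = Σⱼ₌₁ⁿ (yⱼ − ⟨kⱼ, f⟩)² + λ‖f‖² and let f̂_λ = Σᵢ₌₁ⁿ cᵢ kᵢ with c = (K_D + λ Iₙ)⁻¹ y. Then the minimum value of E_λ is E_λ(f̂_λ) = λ · ⟨(K_D + λ Iₙ)⁻¹ y, y⟩, where ⟨·,·⟩ on the right denotes the Euclidean inner product on ℝⁿ. -/

import Mathlib

/-!
With `G` the Gram matrix of `k` and `A = G + λ I`, the coefficients `c = A⁻¹ y` satisfy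
`G c = y - λ c`. Hence every residual `yⱼ - ⟪kⱼ, f̂⟫ = (G c)ⱼ` collapses to `λ cⱼ`, and
`‖f̂‖² = c ⬝ G c = c ⬝ y - λ c ⬝ c`; the terms `λ² c ⬝ c` cancel, leaving `λ c ⬝ y`.
Invertibility of `A` comes from `G` being positive semidefinite.
-/

open scoped RealInnerProductSpace Matrix

open Matrix

section Ridge

variable {ι E : Type*} [Fintype ι] [NormedAddCommGroup E] [InnerProductSpace ℝ E]

theorem inner_sum_smul_eq_gram_mulVec (k : ι → E) (c : ι → ℝ) (j : ι) :
    ⟪k j, ∑ i, c i • k i⟫ = (gram ℝ k *ᵥ c) j := by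
  simp only [inner_sum, real_inner_smul_right, mulVec, dotProduct, gram_apply, mul_comm]

theorem norm_sum_smul_sq_eq_dotProduct_gram_mulVec (k : ι → E) (c : ι → ℝ) :
    ‖∑ i, c i • k i‖ ^ 2 = c ⬝ᵥ (gram ℝ k *ᵥ c) := by
  rw [← real_inner_self_eq_norm_sq, ← star_dotProduct_gram_mulVec, star_trivial]

theorem posDef_gram_add_smul_one [DecidableEq ι] (k : ι → E) {lam : ℝ} (hlam : 0 < lam) :
    (gram ℝ k + lam • (1 : Matrix ι ι ℝ)).PosDef :=
  PosDef.posSemidef_add (posSemidef_gram ℝ k) (PosDef.one.smul hlam)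

theorem ridge_objective_eq_of_mulVec_eq [DecidableEq ι] (k : ι → E) (y c : ι → ℝ) (lam : ℝ)
    (hc : (gram ℝ k + lam • (1 : Matrix ι ι ℝ)) *ᵥ c = y) :
    ∑ j, (y j - ⟪k j, ∑ i, c i • k i⟫) ^ 2 + lam * ‖∑ i, c i • k i‖ ^ 2 = lam * (c ⬝ᵥ y) := by
  have hgram : gram ℝ k *ᵥ c = y - lam • c := by
    rw [← hc, add_mulVec, smul_mulVec, one_mulVec, add_sub_cancel_right]
  have hresidual : ∀ j, y j - ⟪k j, ∑ i, c i • k i⟫ = lam * c j := by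
    intro j
    rw [inner_sum_smul_eq_gram_mulVec, hgram, Pi.sub_apply, Pi.smul_apply, smul_eq_mul,
      sub_sub_cancel]
  have hsq : ∑ j, (lam * c j) ^ 2 = lam ^ 2 * (c ⬝ᵥ c) := by
    simp only [dotProduct, Finset.mul_sum]
    exact Finset.sum_congr rfl fun j _ => by ring
  rw [Finset.sum_congr rfl fun j _ => by rw [hresidual j], hsq,
    norm_sum_smul_sq_eq_dotProduct_gram_mulVec, hgram, dotProduct_sub, dotProduct_smul,
    smul_eq_mul]
  ring

end Ridge

theorem ridge_regression_min_value_general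
    {H : Type*} [NormedAddCommGroup H] [InnerProductSpace ℝ H]
    (n : ℕ) (k : Fin n → H) (y : Fin n → ℝ) (lam : ℝ) (hlam : 0 < lam)
    (KD : Matrix (Fin n) (Fin n) ℝ) (hKD : ∀ i j, KD i j = ⟪k i, k j⟫)
    (c : Fin n → ℝ)
    (hc : c = (KD + lam • (1 : Matrix (Fin n) (Fin n) ℝ))⁻¹ *ᵥ y)
    (E : H → ℝ)
    (hE : ∀ f : H, E f = (∑ j, (y j - ⟪k j, f⟫) ^ 2) + lam * ‖f‖ ^ 2)
    (fhat : H) (hfhat : fhat = ∑ i, c i • k i) :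
    E fhat = lam * (((KD + lam • (1 : Matrix (Fin n) (Fin n) ℝ))⁻¹ *ᵥ y) ⬝ᵥ y) := by
  obtain rfl : KD = gram ℝ k := Matrix.ext hKD
  have hunit : IsUnit (gram ℝ k + lam • (1 : Matrix (Fin n) (Fin n) ℝ)).det :=
    (isUnit_iff_isUnit_det _).mp (posDef_gram_add_smul_one k hlam).isUnit
  have hsolve : (gram ℝ k + lam • (1 : Matrix (Fin n) (Fin n) ℝ)) *ᵥ c = y := by
    rw [hc, mulVec_mulVec, mul_nonsing_inv _ hunit, one_mulVec]
  rw [hE, hfhat, ridge_objective_eq_of_mulVec_eq k y c lam hsolve, hc]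

/-- The minimum value of the ridge-regression functional
`E_λ(f) = ∑ j (y j - ⟪k j, f⟫)² + λ ‖f‖²`, attained at
`f̂_λ = ∑ i c i • k i` with `c = (K_D + λ Iₙ)⁻¹ y`, equals
`λ ⟨(K_D + λ Iₙ)⁻¹ y, y⟩` (Euclidean inner product on ℝⁿ). -/
theorem ridge_regression_min_value
    {H : Type*} [NormedAddCommGroup H] [InnerProductSpace ℝ H] [CompleteSpace H]
    (n : ℕ) (k : Fin n → H) (y : Fin n → ℝ) (lam : ℝ) (hlam : 0 < lam)
    (KD : Matrix (Fin n) (Fin n) ℝ) (hKD : ∀ i j, KD i j = ⟪k i, k j⟫)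
    (c : Fin n → ℝ)
    (hc : c = (KD + lam • (1 : Matrix (Fin n) (Fin n) ℝ))⁻¹ *ᵥ y)
    (E : H → ℝ)
    (hE : ∀ f : H, E f = (∑ j, (y j - ⟪k j, f⟫) ^ 2) + lam * ‖f‖ ^ 2)
    (fhat : H) (hfhat : fhat = ∑ i, c i • k i) :
    E fhat = lam * (((KD + lam • (1 : Matrix (Fin n) (Fin n) ℝ))⁻¹ *ᵥ y) ⬝ᵥ y) :=
  ridge_regression_min_value_general n k y lam hlam KD hKD c hc E hE fhat hfhat
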